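/- arXiv:1602.04472 — 2 statements merged into one kernel-verified Lean document; each statement's English description precedes it below -/
import Mathlib

section
/- Let n ≥ 0 and let a be a non-inflexional parametrised arc in ℂ^{n+1} (so the wronskian W_a is a unit of ℂ[[t]]). For 1 ≤ i ≤ n+1, set p_i := (−1)^i · i! · D_i / W_a ∈ ℂ[[t]], where D_i := det(a^{[0]}, …, a^{[n−i]}, a^{[n−i+2]}, …, a^{[n+1]}) is the determinant of the matrix of divided derivatives a^{[0]},…,a^{[n+1]} with a^{[n+1−i]} omitted. Then every coordinate x = a^k of the arc satisfies the linear differential equation x^{(n+1)} + Σ_{i=1}^{n+1} (n+1 choose i) · p_i · x^{(n+1−i)} = 0 in ℂ[[t]]. -/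
open PowerSeries

noncomputable section

/-- The `i`-th divided derivative `(1/i!)·f⁽ⁱ⁾` of a formal power series. -/
def dDeriv (i : ℕ) (f : ℂ⟦X⟧) : ℂ⟦X⟧ :=
  (Nat.factorial i : ℂ)⁻¹ • (⇑(PowerSeries.derivative ℂ))^[i] f

/-- The wronskian of a parametrised arc in `ℂ^N`. -/
def wrons {N : ℕ} (a : Fin N → ℂ⟦X⟧) : ℂ⟦X⟧ :=
  Matrix.det (Matrix.of fun i j : Fin N => dDeriv (j : ℕ) (a i))

/-- A parametrised arc is non-inflexional if its wronskian is a unit of `ℂ⟦t⟧`. -/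
def NonInflexional {N : ℕ} (a : Fin N → ℂ⟦X⟧) : Prop :=
  PowerSeries.constantCoeff (wrons a) ≠ 0

/-- Composition `g ∘ φ` of formal power series (meaningful when `φ(0) = 0`). -/
def pscomp (φ g : ℂ⟦X⟧) : ℂ⟦X⟧ :=
  PowerSeries.mk fun m =>
    PowerSeries.coeff m
      (∑ k ∈ Finset.range (m + 1), PowerSeries.C (PowerSeries.coeff k g) * φ ^ k)

/-- `c` is a normalization of the arc `a`: `c(t) = u(t)·(g·a)(φ(t))` with `g ∈ GL_N(ℂ)`,
`u` a unit of `ℂ⟦t⟧`, `φ(0) = 0`, `φ′(0) ≠ 0`. -/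
def IsNormalization {N : ℕ} (a c : Fin N → ℂ⟦X⟧) : Prop :=
  ∃ (g : Matrix (Fin N) (Fin N) ℂ) (u φ : ℂ⟦X⟧),
    IsUnit g.det ∧ IsUnit u ∧ PowerSeries.constantCoeff φ = 0 ∧
    PowerSeries.coeff 1 φ ≠ 0 ∧
    ∀ i, c i = u * pscomp φ (∑ j, g i j • a j)

/-- `f ≡ g (mod t^m)`. -/
def ModEq (f g : ℂ⟦X⟧) (m : ℕ) : Prop := ∀ j < m, PowerSeries.coeff j (f - g) = 0

/-- The determinant `det(a_{e 0}, a_{e 1}, …, a_{e n})` of coefficient vectors of the arc `a`. -/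
def Umin {n : ℕ} (e : Fin (n + 1) → ℕ) (a : Fin (n + 1) → ℂ⟦X⟧) : ℂ :=
  Matrix.det (Matrix.of fun i j => PowerSeries.coeff (e j) (a i))

/-- `U = U_{(0)}`. -/
def U0 {n : ℕ} (a : Fin (n + 1) → ℂ⟦X⟧) : ℂ := Umin (fun j => (j : ℕ)) a
/-- `U₁ = U_{(1)}`. -/
def U1 {n : ℕ} (a : Fin (n + 1) → ℂ⟦X⟧) : ℂ :=
  Umin (fun j => if (j : ℕ) = n then n + 1 else (j : ℕ)) a
/-- `U₂ = U_{(2)}`. -/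
def U2 {n : ℕ} (a : Fin (n + 1) → ℂ⟦X⟧) : ℂ :=
  Umin (fun j => if (j : ℕ) = n then n + 2 else (j : ℕ)) a
/-- `U₃ = U_{(3)}`. -/
def U3 {n : ℕ} (a : Fin (n + 1) → ℂ⟦X⟧) : ℂ :=
  Umin (fun j => if (j : ℕ) = n then n + 3 else (j : ℕ)) a
/-- `U₁₁ = U_{(1,1)}`. -/
def U11 {n : ℕ} (a : Fin (n + 1) → ℂ⟦X⟧) : ℂ :=
  Umin (fun j => if n - 1 ≤ (j : ℕ) then (j : ℕ) + 1 else (j : ℕ)) a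
/-- `U₂₁ = U_{(2,1)}`. -/
def U21 {n : ℕ} (a : Fin (n + 1) → ℂ⟦X⟧) : ℂ :=
  Umin (fun j => if (j : ℕ) = n then n + 2 else if (j : ℕ) = n - 1 then n else (j : ℕ)) a
/-- `U₁₁₁ = U_{(1,1,1)}`. -/
def U111 {n : ℕ} (a : Fin (n + 1) → ℂ⟦X⟧) : ℂ :=
  Umin (fun j => if n - 2 ≤ (j : ℕ) then (j : ℕ) + 1 else (j : ℕ)) a

/-- The Monge expression `U²(U₃+2U₂₁−2U₁₁₁) − 3UU₁(U₁₁+U₂) + 2U₁³` of an arc. -/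
def MongeExpr {n : ℕ} (a : Fin (n + 1) → ℂ⟦X⟧) : ℂ :=
  U0 a ^ 2 * (U3 a + 2 * U21 a - 2 * U111 a) - 3 * U0 a * U1 a * (U11 a + U2 a) + 2 * U1 a ^ 3

end

/-!
Append the coordinate `a k` to the arc as an extra row: the resulting square matrix of divided
derivatives has two equal rows, so its determinant vanishes, and expanding it along the new row
gives `∑ⱼ (-1)ʲ (a k)^{[j]} Dⱼ = 0`, where `Dⱼ` omits the column `j` and `D_{n+1} = W_a`.
Dividing by `W_a` and turning divided derivatives into derivatives with
`C(n+1,i) i! (n+1-i)! = (n+1)!` is the claimed equation.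
-/

open Finset

/-- The paper's `D_i` is `wronskMinor a (n + 1 - i)`. -/
noncomputable def wronskMinor {N : ℕ} (a : Fin N → ℂ⟦X⟧) (j : ℕ) : ℂ⟦X⟧ :=
  Matrix.det (Matrix.of fun (r c : Fin N) => dDeriv (if (c : ℕ) < j then c else c + 1) (a r))

lemma wronskMinor_eq_det_succAbove {N : ℕ} (a : Fin N → ℂ⟦X⟧) (j : Fin (N + 1)) :
    wronskMinor a j =
      Matrix.det (Matrix.of fun (r c : Fin N) => dDeriv (j.succAbove c) (a r)) := by
  unfold wronskMinor
  congr! 4 with r c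
  simp [Fin.succAbove, Fin.lt_def, apply_ite Fin.val]

lemma wronskMinor_self {N : ℕ} (a : Fin N → ℂ⟦X⟧) : wronskMinor a N = wrons a := by
  simp [wronskMinor, wrons]

lemma factorial_smul_dDeriv (j : ℕ) (f : ℂ⟦X⟧) :
    (j.factorial : ℂ) • dDeriv j f = (⇑(d⁄dX ℂ))^[j] f := by
  rw [dDeriv, smul_smul, mul_inv_cancel₀ (by exact_mod_cast j.factorial_ne_zero), one_smul]

lemma sum_neg_one_pow_mul_dDeriv_mul_wronskMinor {N : ℕ} (a : Fin N → ℂ⟦X⟧) (k : Fin N) :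
    ∑ j ∈ range (N + 1), (-1) ^ j * dDeriv j (a k) * wronskMinor a j = 0 := by
  set M : Matrix (Fin (N + 1)) (Fin (N + 1)) ℂ⟦X⟧ :=
    Matrix.of fun r c => dDeriv c (Fin.snoc (α := fun _ => ℂ⟦X⟧) a (a k) r)
  have hM : M.det = 0 :=
    Matrix.det_zero_of_row_eq (Fin.castSucc_lt_last k).ne (by ext c; simp [M])
  have hminor : ∀ j : Fin (N + 1),
      M (Fin.last N) j * (M.submatrix (Fin.last N).succAbove j.succAbove).det =
        dDeriv j (a k) * wronskMinor a j := by
    intro j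
    rw [wronskMinor_eq_det_succAbove]
    congr 1
    · simp [M]
    · exact congrArg Matrix.det (Matrix.ext fun r c => by simp [M])
  rw [Matrix.det_succ_row M (Fin.last N)] at hM
  simp only [mul_assoc, hminor, Fin.val_last, pow_add, ← mul_sum] at hM
  rw [← Fin.sum_univ_eq_sum_range (fun j => (-1) ^ j * dDeriv j (a k) * wronskMinor a j)]
  simpa only [mul_assoc] using (mul_eq_zero.mp hM).resolve_left (pow_ne_zero _ (by norm_num))

lemma choose_mul_factorial_mul_factorial_neg_one_pow {N i : ℕ} (hi : i ≤ N) :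
    (N.choose i : ℂ) * ((-1) ^ i * i.factorial) * (N - i).factorial =
      N.factorial * (-1) ^ N * (-1) ^ (N - i) := by
  have hsign : ((-1 : ℂ) ^ N * (-1) ^ (N - i)) = (-1) ^ i := by
    rw [← pow_add, show N + (N - i) = i + 2 * (N - i) by omega, pow_add, pow_mul]
    simp
  rw [mul_assoc _ ((-1 : ℂ) ^ N), hsign, ← Nat.choose_mul_factorial_mul_factorial hi]
  push_cast
  ring

lemma add_sum_Icc_one_reflect {M : Type*} [AddCommMonoid M] (f : ℕ → M) (N : ℕ) :
    f N + ∑ i ∈ Icc 1 N, f (N - i) = ∑ j ∈ range (N + 1), f j := by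
  rw [sum_range_succ, add_comm, ← Ico_add_one_right_eq_Icc, sum_Ico_reflect f 1 le_rfl,
    Nat.sub_self, Nat.add_sub_cancel, Nat.Ico_zero_eq_range]

open PowerSeries in
/-- every coordinate of a non-inflexional arc in `ℂ^{n+1}` satisfies the
linear differential equation `x^{(n+1)} + Σ_{i=1}^{n+1} C(n+1,i)·p_i·x^{(n+1−i)} = 0`,
where `p_i = (−1)^i·i!·D_i/W_a` and `D_i` is the wronskian-type determinant with the
column `a^{[n+1−i]}` omitted. -/
theorem arc_satisfies_linear_ode
    (n : ℕ) (a : Fin (n + 1) → ℂ⟦X⟧) (ha : NonInflexional a)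
    (p : ℕ → ℂ⟦X⟧)
    (hp : ∀ (i : ℕ) (hi1 : 1 ≤ i) (hi2 : i ≤ n + 1),
      p i = ((-1 : ℂ) ^ i * (Nat.factorial i : ℂ)) •
        (Matrix.det (Matrix.of fun (r j : Fin (n + 1)) =>
            dDeriv ((((⟨n + 1 - i, by omega⟩ : Fin (n + 2)).succAbove j) : Fin (n + 2)) : ℕ)
              (a r)) *
          (wrons a)⁻¹)) :
    ∀ k : Fin (n + 1),
      (⇑(PowerSeries.derivative ℂ))^[n + 1] (a k) +
        ∑ i ∈ Finset.Icc 1 (n + 1), ((n + 1).choose i : ℂ⟦X⟧) * p i *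
          (⇑(PowerSeries.derivative ℂ))^[n + 1 - i] (a k) = 0 := by
  intro k
  set T : ℕ → ℂ⟦X⟧ := fun j => (-1) ^ j * dDeriv j (a k) * wronskMinor a j
  set c : ℂ := (n + 1).factorial * (-1) ^ (n + 1)
  have hterm : ∀ i ∈ Icc 1 (n + 1), ((n + 1).choose i : ℂ⟦X⟧) * p i *
      (⇑(d⁄dX ℂ))^[n + 1 - i] (a k) = C c * ((wrons a)⁻¹ * T (n + 1 - i)) := by
    intro i hi
    obtain ⟨hi1, hi2⟩ := mem_Icc.mp hi
    rw [hp i hi1 hi2, ← wronskMinor_eq_det_succAbove, ← factorial_smul_dDeriv]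
    have hscalar := congrArg C (choose_mul_factorial_mul_factorial_neg_one_pow hi2)
    simp only [map_mul, map_pow, map_neg, map_one, map_natCast] at hscalar
    simp only [smul_eq_C_mul, T, c, map_mul, map_pow, map_neg, map_one, map_natCast]
    linear_combination
      (wronskMinor a (n + 1 - i) * (wrons a)⁻¹ * dDeriv (n + 1 - i) (a k)) * hscalar
  have hlead : (⇑(d⁄dX ℂ))^[n + 1] (a k) = C c * ((wrons a)⁻¹ * T (n + 1)) := by
    have hW : (wrons a)⁻¹ * wrons a = 1 := PowerSeries.inv_mul_cancel _ ha
    have hsign : (-1 : ℂ⟦X⟧) ^ (n + 1) * (-1) ^ (n + 1) = 1 := by rw [← mul_pow]; simp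
    rw [← factorial_smul_dDeriv]
    simp only [smul_eq_C_mul, T, c, wronskMinor_self, map_mul, map_pow, map_neg, map_one,
      map_natCast]
    linear_combination (-(n + 1).factorial * dDeriv (n + 1) (a k)) *
      ((-1) ^ (n + 1) * (-1) ^ (n + 1) * hW + hsign)
  rw [sum_congr rfl hterm, hlead, ← mul_sum, ← mul_sum, ← mul_add, ← mul_add,
    add_sum_Icc_one_reflect T]
  simp only [T, sum_neg_one_pow_mul_dDeriv_mul_wronskMinor, mul_zero]
end

section
/- Let a₂, a₃, a₄, a₅ ∈ ℂ with a₂ ≠ 0, and let f := a₂t² + a₃t³ + a₄t⁴ + a₅t⁵ ∈ ℂ[[t]]. Then there exists a nonzero quadratic form q(X,Y,Z) ∈ ℂ[X,Y,Z] (homogeneous of degree 2) such that q(1, t, f(t)) ≡ 0 (mod t⁶) if and only if 2a₃³ − 3a₂a₃a₄ + a₂²a₅ = 0. (The length-6 jet of the plane arc (1, t, f) lies on a conic exactly when the Monge invariant μ = −2a₃³ + 3a₂a₃a₄ − a₂²a₅ vanishes.) -/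
open PowerSeries

/-!
Write a ternary quadratic form as `q = Σ cᵢ mᵢ` over the six monomials
`X², XY, Y², XZ, YZ, Z²`. The first six coefficients of `q(1, t, f)` depend linearly on
`c ∈ ℂ⁶`, so a nonzero `q` vanishing to order six exists iff the `6 × 6` matrix of this map is
singular. In the chosen monomial order that matrix is block triangular, and its determinant is
`a₂ (2a₃³ − 3a₂a₃a₄ + a₂²a₅)`.
-/

open scoped Matrix

section QuadraticForms

variable {R : Type*} [CommSemiring R]

noncomputable def quadraticExponent : Fin 6 → Fin 3 →₀ ℕ :=
  ![Finsupp.single 0 2, Finsupp.single 0 1 + Finsupp.single 1 1, Finsupp.single 1 2,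
    Finsupp.single 0 1 + Finsupp.single 2 1, Finsupp.single 1 1 + Finsupp.single 2 1,
    Finsupp.single 2 2]

lemma quadraticExponent_injective : Function.Injective quadraticExponent := by
  intro i j h
  have h0 := DFunLike.congr_fun h 0
  have h1 := DFunLike.congr_fun h 1
  have h2 := DFunLike.congr_fun h 2
  fin_cases i <;> fin_cases j <;> simp [quadraticExponent] at h0 h1 h2 ⊢

lemma degree_quadraticExponent (i : Fin 6) : (quadraticExponent i).degree = 2 := by
  fin_cases i <;> simp [quadraticExponent]

lemma exists_quadraticExponent_eq {d : Fin 3 →₀ ℕ} (hd : d.degree = 2) :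
    ∃ i, quadraticExponent i = d := by
  have hsum : d 0 + d 1 + d 2 = 2 := by
    simpa [Finsupp.degree_eq_sum, Fin.sum_univ_three] using hd
  have hd : d = Finsupp.single 0 (d 0) + Finsupp.single 1 (d 1) + Finsupp.single 2 (d 2) := by
    ext x; fin_cases x <;> simp
  have : (d 0 = 2 ∧ d 1 = 0 ∧ d 2 = 0) ∨ (d 0 = 1 ∧ d 1 = 1 ∧ d 2 = 0)
      ∨ (d 0 = 0 ∧ d 1 = 2 ∧ d 2 = 0) ∨ (d 0 = 1 ∧ d 1 = 0 ∧ d 2 = 1)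
      ∨ (d 0 = 0 ∧ d 1 = 1 ∧ d 2 = 1) ∨ (d 0 = 0 ∧ d 1 = 0 ∧ d 2 = 2) := by omega
  rcases this with ⟨h0, h1, h2⟩ | ⟨h0, h1, h2⟩ | ⟨h0, h1, h2⟩ | ⟨h0, h1, h2⟩ | ⟨h0, h1, h2⟩ |
    ⟨h0, h1, h2⟩ <;> rw [h0, h1, h2] at hd <;> subst hd
  exacts [⟨0, by simp [quadraticExponent]⟩, ⟨1, by simp [quadraticExponent]⟩,
    ⟨2, by simp [quadraticExponent]⟩, ⟨3, by simp [quadraticExponent]⟩,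
    ⟨4, by simp [quadraticExponent]⟩, ⟨5, by simp [quadraticExponent]⟩]

noncomputable def quadraticOfCoeffs (c : Fin 6 → R) : MvPolynomial (Fin 3) R :=
  ∑ i, MvPolynomial.monomial (quadraticExponent i) (c i)

lemma coeff_quadraticOfCoeffs (c : Fin 6 → R) (i : Fin 6) :
    (quadraticOfCoeffs c).coeff (quadraticExponent i) = c i := by
  simp [quadraticOfCoeffs, MvPolynomial.coeff_sum, MvPolynomial.coeff_monomial,
    quadraticExponent_injective.eq_iff]

lemma isHomogeneous_quadraticOfCoeffs (c : Fin 6 → R) :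
    (quadraticOfCoeffs c).IsHomogeneous 2 :=
  MvPolynomial.IsHomogeneous.sum _ _ _ fun i _ =>
    MvPolynomial.isHomogeneous_monomial _ (degree_quadraticExponent i)

lemma quadraticOfCoeffs_eq_zero_iff {c : Fin 6 → R} : quadraticOfCoeffs c = 0 ↔ c = 0 := by
  refine ⟨fun h => funext fun i => ?_, fun h => by simp [h, quadraticOfCoeffs]⟩
  rw [← coeff_quadraticOfCoeffs c i, h, MvPolynomial.coeff_zero, Pi.zero_apply]

lemma MvPolynomial.IsHomogeneous.eq_quadraticOfCoeffs {q : MvPolynomial (Fin 3) R}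
    (hq : q.IsHomogeneous 2) :
    q = quadraticOfCoeffs fun i => q.coeff (quadraticExponent i) := by
  ext d
  by_cases hd : d.degree = 2
  · obtain ⟨i, rfl⟩ := exists_quadraticExponent_eq hd
    rw [coeff_quadraticOfCoeffs]
  · rw [hq.coeff_eq_zero hd, (isHomogeneous_quadraticOfCoeffs _).coeff_eq_zero hd]

lemma aeval_monomial_quadraticExponent {A : Type*} [CommSemiring A] [Algebra R A]
    (v : Fin 3 → A) (i : Fin 6) :
    MvPolynomial.aeval v (MvPolynomial.monomial (quadraticExponent i) (1 : R)) =
      ![v 0 ^ 2, v 0 * v 1, v 1 ^ 2, v 0 * v 2, v 1 * v 2, v 2 ^ 2] i := by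
  fin_cases i <;>
    simp [quadraticExponent, MvPolynomial.aeval_monomial, Finsupp.prod_add_index, pow_add]

noncomputable def conicJetMatrix (v : Fin 3 → R⟦X⟧) (n : ℕ) : Matrix (Fin n) (Fin 6) R :=
  Matrix.of fun j i =>
    coeff j (MvPolynomial.aeval v (MvPolynomial.monomial (quadraticExponent i) (1 : R)))

lemma coeff_aeval_quadraticOfCoeffs (v : Fin 3 → R⟦X⟧) {n : ℕ} (c : Fin 6 → R) (j : Fin n) :
    coeff j (MvPolynomial.aeval v (quadraticOfCoeffs c)) = (conicJetMatrix v n *ᵥ c) j := by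
  simp only [quadraticOfCoeffs, conicJetMatrix, Matrix.mulVec, dotProduct, Matrix.of_apply,
    map_sum]
  refine Finset.sum_congr rfl fun i _ => ?_
  conv_lhs => rw [← mul_one (c i), ← smul_eq_mul, ← MvPolynomial.smul_monomial]
  rw [map_smul, map_smul, smul_eq_mul]
  exact mul_comm _ _

lemma exists_conic_through_jet_iff (v : Fin 3 → R⟦X⟧) (n : ℕ) :
    (∃ q : MvPolynomial (Fin 3) R, q ≠ 0 ∧ q.IsHomogeneous 2 ∧
        ∀ j < n, coeff j (MvPolynomial.aeval v q) = 0) ↔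
      ∃ c ≠ 0, conicJetMatrix v n *ᵥ c = 0 := by
  constructor
  · rintro ⟨q, hq0, hq, hjet⟩
    refine ⟨fun i => q.coeff (quadraticExponent i), ?_, funext fun j => ?_⟩
    · rwa [Ne, ← quadraticOfCoeffs_eq_zero_iff, ← hq.eq_quadraticOfCoeffs]
    · rw [← coeff_aeval_quadraticOfCoeffs, ← hq.eq_quadraticOfCoeffs]
      exact hjet j j.2
  · rintro ⟨c, hc0, hc⟩
    refine ⟨quadraticOfCoeffs c, quadraticOfCoeffs_eq_zero_iff.not.mpr hc0,
      isHomogeneous_quadraticOfCoeffs c, fun j hj => ?_⟩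
    rw [← Fin.val_mk hj, coeff_aeval_quadraticOfCoeffs, hc, Pi.zero_apply]

end QuadraticForms

section QuinticArc

variable {R : Type*} [CommRing R]

lemma conicJetMatrix_quinticArc (a2 a3 a4 a5 : R) (f : R⟦X⟧)
    (hf : f = C a2 * X ^ 2 + C a3 * X ^ 3 + C a4 * X ^ 4 + C a5 * X ^ 5) :
    conicJetMatrix ![1, X, f] 6 =
      !![1, 0, 0, 0, 0, 0;
         0, 1, 0, 0, 0, 0;
         0, 0, 1, a2, 0, 0;
         0, 0, 0, a3, a2, 0;
         0, 0, 0, a4, a3, a2 ^ 2;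
         0, 0, 0, a5, a4, 2 * a2 * a3] := by
  have hsq : f ^ 2 = C (a2 ^ 2) * X ^ 4 + C (2 * a2 * a3) * X ^ 5 + X ^ 6 *
      (C (a3 ^ 2 + 2 * a2 * a4) + C (2 * a2 * a5 + 2 * a3 * a4) * X
        + C (2 * a3 * a5 + a4 ^ 2) * X ^ 2 + C (2 * a4 * a5) * X ^ 3 + C (a5 ^ 2) * X ^ 4) := by
    subst hf
    simp only [map_add, map_mul, map_pow, map_ofNat]
    ring
  ext j i
  simp only [conicJetMatrix, Matrix.of_apply, aeval_monomial_quadraticExponent,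
    Matrix.cons_val_zero, Matrix.cons_val_one, Matrix.cons_val_two, Matrix.tail_cons,
    Matrix.head_cons]
  rw [hsq, hf]
  fin_cases j <;> fin_cases i <;>
    simp [-map_pow, -map_mul, -coeff_zero_eq_constantCoeff, coeff_X_pow, coeff_X,
      coeff_X_pow_mul', coeff_zero_X_mul, mul_add]

lemma det_conicJetMatrix_quinticArc (a2 a3 a4 a5 : R) :
    (!![1, 0, 0, 0, 0, 0;
        0, 1, 0, 0, 0, 0;
        0, 0, 1, a2, 0, 0;
        0, 0, 0, a3, a2, 0;
        0, 0, 0, a4, a3, a2 ^ 2;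
        0, 0, 0, a5, a4, 2 * a2 * a3] : Matrix (Fin 6) (Fin 6) R).det =
      a2 * (2 * a3 ^ 3 - 3 * a2 * a3 * a4 + a2 ^ 2 * a5) := by
  simp [Matrix.det_succ_row_zero, Fin.sum_univ_succ]
  ring

end QuinticArc

open PowerSeries in
/-- the length-6 jet of the plane arc `(1, t, f)` with
`f = a₂t² + a₃t³ + a₄t⁴ + a₅t⁵`, `a₂ ≠ 0`, lies on a conic if and only if
`2a₃³ − 3a₂a₃a₄ + a₂²a₅ = 0`. -/
theorem jet_on_conic_iff_monge_invariant_vanishes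
    (a2 a3 a4 a5 : ℂ) (ha2 : a2 ≠ 0)
    (f : ℂ⟦X⟧)
    (hf : f = PowerSeries.C a2 * PowerSeries.X ^ 2 + PowerSeries.C a3 * PowerSeries.X ^ 3
      + PowerSeries.C a4 * PowerSeries.X ^ 4 + PowerSeries.C a5 * PowerSeries.X ^ 5) :
    (∃ q : MvPolynomial (Fin 3) ℂ, q ≠ 0 ∧ q.IsHomogeneous 2 ∧
        ∀ j < 6, PowerSeries.coeff j
          (MvPolynomial.aeval ![(1 : ℂ⟦X⟧), PowerSeries.X, f] q) = 0) ↔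
      2 * a3 ^ 3 - 3 * a2 * a3 * a4 + a2 ^ 2 * a5 = 0 := by
  rw [exists_conic_through_jet_iff, conicJetMatrix_quinticArc a2 a3 a4 a5 f hf,
    Matrix.exists_mulVec_eq_zero_iff, det_conicJetMatrix_quinticArc, mul_eq_zero,
    or_iff_right ha2]
end
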